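/- arXiv:1911.11105 — 4 statements merged into one kernel-verified Lean document; each statement's English description precedes it below -/
import Mathlib

section
/- Let G be a connected graph (finite or infinite, locally finite) that is κ-regular for an uncountable cardinal κ satisfying κ = ℵ_κ. Then G admits an edge-colouring with two colours such that the only automorphism of G preserving the colouring is the identity; that is, D'(G) ≤ 2. -/
/-!
Connectivity and `κ`-regularity give `|V| ≤ κ`, so `V` embeds into the initial ordinal of `κ`.
A vertex `v` of rank `α < κ` has at most `|α| ≤ ℵ_α` neighbours of smaller rank, and
`ℵ_α < ℵ_κ = κ`, so it still has `κ` neighbours of larger rank; let `v` colour red `ℵ_α` of the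
edges to them. The only other red edges at `v` come from neighbours of smaller rank, so the red
degree of `v` is exactly `ℵ_α`. Red degrees are therefore pairwise distinct, and an automorphism
preserving the colouring preserves red degrees, so it fixes every vertex.
-/

open Cardinal

universe u

open Function

namespace SimpleGraph

variable {V : Type u} {G : SimpleGraph V}

theorem Walk.eq_of_map_darts_eq {K : Type*} {ℓ : G.Dart → K}
    (hℓ : ∀ d d' : G.Dart, ℓ d = ℓ d' → d.fst = d'.fst → d = d') {u v w : V}
    (p : G.Walk u v) (q : G.Walk u w) (h : p.darts.map ℓ = q.darts.map ℓ) : v = w := by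
  induction p generalizing w with
  | nil => cases q with
    | nil => rfl
    | cons => simp at h
  | cons _ p ih => cases q with
    | nil => simp at h
    | cons _ q =>
      simp only [darts_cons, List.map_cons, List.cons.injEq] at h
      obtain ⟨hd, htail⟩ := h
      cases congrArg (·.snd) (hℓ _ _ hd rfl)
      exact ih q htail

theorem Connected.mk_le_of_mk_neighborSet_le {κ : Cardinal.{u}} (hG : G.Connected)
    (hκ : ℵ₀ ≤ κ) (hdeg : ∀ v, #(G.neighborSet v) ≤ κ) : #V ≤ κ := by
  obtain ⟨v₀⟩ := hG.nonempty
  have hlabel : ∀ v, Nonempty (G.neighborSet v ↪ κ.out) := fun v => by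
    rw [← le_def, mk_out]; exact hdeg v
  let ℓ (d : G.Dart) : κ.out := (hlabel d.fst).some ⟨d.snd, d.adj⟩
  have hℓ : ∀ d d' : G.Dart, ℓ d = ℓ d' → d.fst = d'.fst → d = d' := by
    rintro ⟨⟨a, b⟩, _⟩ ⟨⟨a', b'⟩, _⟩ h (rfl : a = a')
    cases congrArg Subtype.val ((hlabel a).some.injective h)
    rfl
  let walk (v : V) : G.Walk v₀ v := (hG.preconnected v₀ v).some
  calc #V ≤ #(List κ.out) := mk_le_of_injective (f := fun v => (walk v).darts.map ℓ)
        fun v w h => Walk.eq_of_map_darts_eq hℓ (walk v) (walk w) h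
    _ ≤ max ℵ₀ #κ.out := mk_list_le_max _
    _ = κ := by rw [mk_out, max_eq_right hκ]

section Ranked

variable {α : Type*} (G) (r : V → α) (v : V)

def lowerNeighborSet [LT α] : Set V := {w | G.Adj v w ∧ r w < r v}

def upperNeighborSet [LT α] : Set V := {w | G.Adj v w ∧ r v < r w}

variable {G r v}

theorem mk_upperNeighborSet_eq [LinearOrder α] (hr : Injective r) {κ : Cardinal.{u}}
    (hκ : ℵ₀ ≤ κ) (hdeg : #(G.neighborSet v) = κ) (hlow : #(G.lowerNeighborSet r v) < κ) :
    #(G.upperNeighborSet r v) = κ := by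
  have hsub : G.neighborSet v ⊆ G.lowerNeighborSet r v ∪ G.upperNeighborSet r v := fun w hvw =>
    (lt_or_gt_of_ne (hr.ne hvw.ne.symm)).imp (⟨hvw, ·⟩) (⟨hvw, ·⟩)
  have hle : #(G.upperNeighborSet r v) ≤ κ := hdeg ▸ mk_le_mk_of_subset fun _ h => h.1
  refine hle.antisymm (le_of_not_gt fun hup => ?_)
  have := (hdeg ▸ mk_le_mk_of_subset hsub).trans (mk_union_le _ _)
  exact (add_lt_of_lt hκ hlow hup).not_ge this

theorem exists_le_forall_mk_neighborSet_eq [LT α] {μ : V → Cardinal.{u}}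
    (hμ : ∀ v, ℵ₀ ≤ μ v) (hlow : ∀ v, #(G.lowerNeighborSet r v) ≤ μ v)
    (hhigh : ∀ v, μ v ≤ #(G.upperNeighborSet r v)) :
    ∃ H ≤ G, ∀ v, #(H.neighborSet v) = μ v := by
  choose R hRsub hRcard using fun v => le_mk_iff_exists_subset.mp (hhigh v)
  refine ⟨fromRel fun v w => w ∈ R v, fun v w h => ?_, fun v => le_antisymm ?_ ?_⟩
  · obtain ⟨-, h | h⟩ := h
    · exact (hRsub v h).1
    · exact ((hRsub w h).1).symm
  · have hsub :
        (fromRel fun v w => w ∈ R v).neighborSet v ⊆ R v ∪ G.lowerNeighborSet r v := by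
      rintro w ⟨-, h | h⟩
      · exact Or.inl h
      · exact Or.inr ⟨(hRsub w h).1.symm, (hRsub w h).2⟩
    calc _ ≤ #(R v ∪ G.lowerNeighborSet r v : Set V) := mk_le_mk_of_subset hsub
      _ ≤ μ v + μ v := (mk_union_le _ _).trans (add_le_add (hRcard v).le (hlow v))
      _ = μ v := add_eq_self (hμ v)
  · rw [← hRcard v]
    exact mk_le_mk_of_subset fun w h => ⟨fun hvw => (hRsub v h).1.ne hvw, Or.inl h⟩

end Ranked

theorem mk_lowerNeighborSet_le_aleph_typein {α : Type u} [LinearOrder α] [WellFoundedLT α]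
    {r : V → α} (hr : Injective r) (v : V) :
    #(G.lowerNeighborSet r v) ≤ ℵ_ (Ordinal.typein (α := α) (· < ·) (r v)) :=
  (mk_le_of_injective (α := G.lowerNeighborSet r v) (β := {y // y < r v})
    (f := fun w => ⟨r w, w.2.2⟩) fun _ _ h => Subtype.ext (hr (congrArg Subtype.val h))).trans
    (Ordinal.card_le_aleph _)

theorem Iso.adj_iff_of_mem_edgeSet_iff {H : SimpleGraph V} (hHG : H ≤ G) (γ : G ≃g G)
    (hγ : ∀ e : G.edgeSet, (γ.mapEdgeSet e : Sym2 V) ∈ H.edgeSet ↔ (e : Sym2 V) ∈ H.edgeSet)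
    (u w : V) : H.Adj (γ u) (γ w) ↔ H.Adj u w := by
  by_cases huw : G.Adj u w
  · exact hγ ⟨s(u, w), huw⟩
  · exact iff_of_false (fun h => huw (γ.map_adj_iff.mp (hHG h))) (fun h => huw (hHG h))

end SimpleGraph

theorem distinguishing_index_le_two_of_aleph_fixed_point_general {V : Type u} (G : SimpleGraph V)
    (κ : Cardinal.{u}) (hfix : Cardinal.aleph κ.ord = κ)
    (hconn : G.Connected) (hreg : ∀ v : V, #(G.incidenceSet v) = κ) :
    ∃ c : G.edgeSet → Fin 2,
      ∀ γ : G ≃g G, (∀ e : G.edgeSet, c (γ.mapEdgeSet e) = c e) → ∀ v : V, γ v = v := by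
  classical
  have hκ : ℵ₀ ≤ κ := hfix ▸ aleph0_le_aleph _
  have hdeg v : #(G.neighborSet v) = κ :=
    (mk_congr (G.incidenceSetEquivNeighborSet v)).symm.trans (hreg v)
  obtain ⟨f⟩ : Nonempty (V ↪ κ.ord.ToType) := by
    rw [← le_def, mk_toType, card_ord]
    exact hconn.mk_le_of_mk_neighborSet_le hκ fun v => (hdeg v).le
  let μ : V → Cardinal := fun v => ℵ_ (Ordinal.typein (α := κ.ord.ToType) (· < ·) (f v))
  have hμ_lt v : μ v < κ := hfix ▸ aleph_lt_aleph.mpr (Ordinal.typein_lt_self _)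
  have hlow v : #(G.lowerNeighborSet f v) ≤ μ v :=
    SimpleGraph.mk_lowerNeighborSet_le_aleph_typein f.injective v
  have hhigh v : μ v ≤ #(G.upperNeighborSet f v) :=
    (hμ_lt v).le.trans (SimpleGraph.mk_upperNeighborSet_eq f.injective hκ (hdeg v)
      ((hlow v).trans_lt (hμ_lt v))).ge
  obtain ⟨H, hHG, hH⟩ :=
    SimpleGraph.exists_le_forall_mk_neighborSet_eq (fun v => aleph0_le_aleph _) hlow hhigh
  have hμ_inj : Injective μ :=
    aleph.injective.comp ((Ordinal.typein_injective _).comp f.injective)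
  refine ⟨fun e => if (e : Sym2 V) ∈ H.edgeSet then 0 else 1, fun γ hγ v => ?_⟩
  have hγH (e : G.edgeSet) :
      (γ.mapEdgeSet e : Sym2 V) ∈ H.edgeSet ↔ (e : Sym2 V) ∈ H.edgeSet := by
    have hc := hγ e
    dsimp only at hc
    split_ifs at hc <;> simp_all
  let γH : H ≃g H :=
    { γ.toEquiv with map_rel_iff' := γ.adj_iff_of_mem_edgeSet_iff hHG hγH _ _ }
  exact hμ_inj <| (hH (γ v)).symm.trans <| (mk_congr (γH.mapNeighborSet v)).symm.trans (hH v)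

/-- Every connected graph that is `κ`-regular (every vertex has exactly `κ` incident
edges) for an uncountable cardinal `κ` with `ℵ_κ = κ` admits a distinguishing
edge-colouring with two colours, i.e. `D'(G) ≤ 2`. -/
theorem distinguishing_index_le_two_of_aleph_fixed_point {V : Type u} (G : SimpleGraph V)
    (κ : Cardinal.{u}) (huncount : ℵ₀ < κ) (hfix : Cardinal.aleph κ.ord = κ)
    (hconn : G.Connected) (hreg : ∀ v : V, #(G.incidenceSet v) = κ) :
    ∃ c : G.edgeSet → Fin 2,
      ∀ γ : G ≃g G, (∀ e : G.edgeSet, c (γ.mapEdgeSet e) = c e) → ∀ v : V, γ v = v :=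
  distinguishing_index_le_two_of_aleph_fixed_point_general G κ hfix hconn hreg
end

section
/- Let κ be a fixed point of the aleph hierarchy and let G be a connected κ-regular graph with vertex set enumerated as (x_i)_{i<κ}. Suppose each vertex x_i is assigned a 2-colouring of its incident edges in which exactly ℵ_i of them are blue. Then every colour-preserving automorphism of G fixes every vertex; i.e., the colouring is distinguishing. -/
open Cardinal

universe u

/-! An automorphism preserving the colouring maps the blue edges at `v` bijectively onto the
blue edges at `γ v`, so `v` and `γ v` have the same number of blue edges. Since `ℵ` is
injective on ordinals, the vertices `x_i` have pairwise distinct blue degrees `ℵ_i`, and hence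
`γ v = v`. -/

theorem Sym2.map_mem_map_iff {α β : Type*} {f : α → β} (hf : Function.Injective f) {a : α}
    {z : Sym2 α} : f a ∈ z.map f ↔ a ∈ z := by
  rw [Sym2.mem_map]
  exact ⟨fun ⟨b, hb, hba⟩ => hf hba ▸ hb, fun ha => ⟨a, ha, rfl⟩⟩

namespace SimpleGraph.Iso

variable {V W : Type u} {G : SimpleGraph V} {H : SimpleGraph W} {α : Type*}

theorem apply_mem_mapEdgeSet_iff (γ : G ≃g H) {v : V} {e : G.edgeSet} :
    γ v ∈ (γ.mapEdgeSet e).val ↔ v ∈ e.val :=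
  Sym2.map_mem_map_iff γ.injective

theorem mk_incident_colour_eq (γ : G ≃g H) {c : G.edgeSet → α} {c' : H.edgeSet → α}
    (hc : ∀ e, c' (γ.mapEdgeSet e) = c e) (v : V) (a : α) :
    #{e : G.edgeSet // v ∈ e.val ∧ c e = a} = #{e : H.edgeSet // γ v ∈ e.val ∧ c' e = a} :=
  mk_congr <| γ.mapEdgeSet.subtypeEquiv fun e => by rw [apply_mem_mapEdgeSet_iff, hc]

end SimpleGraph.Iso

theorem distinct_blue_degrees_distinguishing_general {V : Type u} (G : SimpleGraph V)
    (κ : Cardinal.{u})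
    (x : {o : Ordinal.{u} // o < κ.ord} → V) (hx : Function.Bijective x)
    (c : G.edgeSet → Bool)
    (hblue : ∀ i : {o : Ordinal.{u} // o < κ.ord},
      #{e : G.edgeSet // x i ∈ e.val ∧ c e = true} = Cardinal.aleph i.val) :
    ∀ γ : G ≃g G, (∀ e : G.edgeSet, c (γ.mapEdgeSet e) = c e) → ∀ v : V, γ v = v := by
  intro γ hc v
  obtain ⟨i, rfl⟩ := hx.surjective v
  obtain ⟨j, hj⟩ := hx.surjective (γ (x i))
  have hsame : ℵ_ i.val = ℵ_ j.val := by
    rw [← hblue i, ← hblue j, hj]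
    exact γ.mk_incident_colour_eq hc (x i) true
  rw [← hj, Subtype.ext (aleph.injective hsame)]

/-- Let `κ = ℵ_κ` be a fixed point of the aleph hierarchy and `G` a connected
`κ`-regular graph with vertex set enumerated as `(x_i)_{i < κ}`.  If each vertex `x_i`
is incident to exactly `ℵ_i` blue edges (in a 2-colouring by `blue = true` and
`green = false`), then every colour-preserving automorphism of `G` fixes every vertex. -/
theorem distinct_blue_degrees_distinguishing {V : Type u} (G : SimpleGraph V)
    (κ : Cardinal.{u}) (hfix : Cardinal.aleph κ.ord = κ) (hconn : G.Connected)
    (hreg : ∀ v : V, #(G.incidenceSet v) = κ)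
    (x : {o : Ordinal.{u} // o < κ.ord} → V) (hx : Function.Bijective x)
    (c : G.edgeSet → Bool)
    (hblue : ∀ i : {o : Ordinal.{u} // o < κ.ord},
      #{e : G.edgeSet // x i ∈ e.val ∧ c e = true} = Cardinal.aleph i.val) :
    ∀ γ : G ≃g G, (∀ e : G.edgeSet, c (γ.mapEdgeSet e) = c e) → ∀ v : V, γ v = v :=
  distinct_blue_degrees_distinguishing_general G κ x hx c hblue
end

section
/- The complete graph K_n on n vertices has distinguishing index D'(K_n) = 2 for all n ≥ 6. -/
/-!
Colour the edges of a graph `H` on the vertex set with one colour and the remaining edges of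
`K_n` with the other: a colour-preserving permutation is then an automorphism of `H`, so an
asymmetric graph on `n` vertices yields a distinguishing 2-colouring. For `n ≥ 6` the path
`0 - 1 - ⋯ - (n-1)` with the chord `{1, 3}` is asymmetric: `1` and `3` are its only vertices of
degree three and `0` is the only leaf adjacent to one of them, so an automorphism fixes `0`, `1`,
`3`, and then, walking along the path, every vertex. A single colour is preserved by every
transposition, so it never distinguishes.
-/

namespace SimpleGraph

variable {V : Type*}

def IsDistinguishingEdgeColoring {G : SimpleGraph V} {α : Type*} (c : G.edgeSet → α) : Prop :=
  ∀ γ : G ≃g G, (∀ e, c (γ.mapEdgeSet e) = c e) → ∀ v, γ v = v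

def IsAsymmetric (G : SimpleGraph V) : Prop :=
  ∀ φ : G ≃g G, ∀ v, φ v = v

theorem not_isDistinguishingEdgeColoring_of_subsingleton [Nontrivial V] {α : Type*}
    [Subsingleton α] (c : (⊤ : SimpleGraph V).edgeSet → α) : ¬ IsDistinguishingEdgeColoring c := by
  classical
  obtain ⟨a, b, hab⟩ := exists_pair_ne V
  intro hc
  have hswap := hc (Iso.completeGraph (Equiv.swap a b)) (fun _ => Subsingleton.elim _ _) a
  exact hab (by simpa [Iso.completeGraph] using hswap.symm)

theorem IsAsymmetric.exists_isDistinguishingEdgeColoring_fin_two {H : SimpleGraph V}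
    (hH : H.IsAsymmetric) :
    ∃ c : (⊤ : SimpleGraph V).edgeSet → Fin 2, IsDistinguishingEdgeColoring c := by
  classical
  refine ⟨fun e => if (e : Sym2 V) ∈ H.edgeSet then 0 else 1, fun γ hγ => hH ⟨γ.toEquiv, ?_⟩⟩
  intro u v
  rcases eq_or_ne u v with rfl | huv
  · simp
  · have hcol : (if s(γ u, γ v) ∈ H.edgeSet then (0 : Fin 2) else 1) =
        if s(u, v) ∈ H.edgeSet then 0 else 1 := hγ ⟨s(u, v), by simpa using huv⟩
    simp only [mem_edgeSet] at hcol
    split_ifs at hcol <;> simp_all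

theorem Iso.apply_eq_self_of_adj {G : SimpleGraph V} (φ : G ≃g G) {u v : V} (hu : φ u = u)
    (huv : G.Adj u v) (hfix : ∀ w, G.Adj u w → w ≠ v → φ w = w) : φ v = v := by
  by_contra hne
  have hadj : G.Adj u (φ v) := hu ▸ φ.map_adj_iff.2 huv
  exact hne (φ.injective (hfix _ hadj hne))

def pathWithChord (n : ℕ) : SimpleGraph (Fin n) :=
  fromRel fun u v => u.val + 1 = v.val ∨ (u.val = 1 ∧ v.val = 3)

namespace pathWithChord

variable {n : ℕ}

instance : DecidableRel (pathWithChord n).Adj := by unfold pathWithChord; infer_instance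

theorem adj_iff {u v : Fin n} : (pathWithChord n).Adj u v ↔
    u.val + 1 = v.val ∨ v.val + 1 = u.val ∨ (u.val = 1 ∧ v.val = 3) ∨ (u.val = 3 ∧ v.val = 1) := by
  simp only [pathWithChord, fromRel_adj, ne_eq, Fin.ext_iff]
  omega

theorem two_lt_degree_iff (hn : 5 ≤ n) (v : Fin n) :
    2 < (pathWithChord n).degree v ↔ v.val = 1 ∨ v.val = 3 := by
  rw [← card_neighborFinset_eq_degree, Finset.two_lt_card_iff]
  simp only [mem_neighborFinset, adj_iff, ne_eq, Fin.ext_iff]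
  constructor
  · rintro ⟨a, b, c, ha, hb, hc, hab, hac, hbc⟩
    omega
  · intro hv
    -- the two path neighbours of `v` and its chord partner `4 - v`
    exact ⟨⟨v.val - 1, by omega⟩, ⟨v.val + 1, by omega⟩, ⟨4 - v.val, by omega⟩, by simp only [true_or, true_and]; omega⟩

theorem degree_le_one_iff (hn : 5 ≤ n) (v : Fin n) :
    (pathWithChord n).degree v ≤ 1 ↔ v.val = 0 ∨ v.val = n - 1 := by
  rw [← card_neighborFinset_eq_degree, Finset.card_le_one]
  simp only [mem_neighborFinset, adj_iff, Fin.ext_iff]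
  constructor
  · intro h
    by_contra! hv
    have := h ⟨v.val - 1, by omega⟩ (by simp only; omega) ⟨v.val + 1, by omega⟩ (Or.inl rfl)
    simp only at this
    omega
  · intro hv a ha b hb
    omega

theorem val_apply_eq_one_or_three (hn : 5 ≤ n) (φ : pathWithChord n ≃g pathWithChord n) {v : Fin n}
    (hv : v.val = 1 ∨ v.val = 3) :
    (φ v).val = 1 ∨ (φ v).val = 3 := by
  rw [← two_lt_degree_iff hn, φ.degree_eq]
  exact (two_lt_degree_iff hn v).2 hv

theorem adj_zero_one (hn : 2 ≤ n) : (pathWithChord n).Adj ⟨0, by omega⟩ ⟨1, by omega⟩ :=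
  adj_iff.2 (Or.inl rfl)

/-- The other leaf `n - 1` is ruled out because its neighbour `n - 2 ≥ 4` has degree two. -/
theorem apply_zero (hn : 6 ≤ n) (φ : pathWithChord n ≃g pathWithChord n) :
    φ ⟨0, by omega⟩ = ⟨0, by omega⟩ := by
  have hleaf : (φ ⟨0, by omega⟩).val = 0 ∨ (φ ⟨0, by omega⟩).val = n - 1 := by
    rw [← degree_le_one_iff (by omega), φ.degree_eq]
    exact (degree_le_one_iff (by omega) _).2 (Or.inl rfl)
  have hadj := adj_iff.1 (φ.map_adj_iff.2 (adj_zero_one (by omega)))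
  have hφ₁ := val_apply_eq_one_or_three (by omega) φ (v := ⟨1, by omega⟩) (Or.inl rfl)
  ext
  show _ = 0
  omega

theorem apply_one (hn : 6 ≤ n) (φ : pathWithChord n ≃g pathWithChord n) :
    φ ⟨1, by omega⟩ = ⟨1, by omega⟩ := by
  have hadj := adj_iff.1 (φ.map_adj_iff.2 (adj_zero_one (by omega)))
  rw [apply_zero hn] at hadj
  ext
  show _ = 1
  simp only at hadj
  omega

theorem apply_three (hn : 6 ≤ n) (φ : pathWithChord n ≃g pathWithChord n) :
    φ ⟨3, by omega⟩ = ⟨3, by omega⟩ := by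
  have hφ₃ := val_apply_eq_one_or_three (by omega) φ (v := ⟨3, by omega⟩) (Or.inr rfl)
  have hne : φ ⟨3, by omega⟩ ≠ φ ⟨1, by omega⟩ := φ.injective.ne (by simp)
  rw [apply_one hn, ne_eq, Fin.ext_iff] at hne
  ext
  show _ = 3
  simp only at hne
  omega

/-- Once `0` and `3` are fixed, every vertex `v > 0` is fixed: it is the only neighbour of
`v - 1` that is not already known to be fixed. -/
theorem isAsymmetric (hn : 6 ≤ n) : (pathWithChord n).IsAsymmetric := by
  intro φ v
  induction v using WellFoundedLT.induction with
  | _ v ih =>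
    rcases Nat.eq_zero_or_pos v.val with hv | hv
    · exact (Fin.ext hv : v = ⟨0, by omega⟩) ▸ apply_zero hn φ
    · refine φ.apply_eq_self_of_adj (u := ⟨v.val - 1, by omega⟩)
        (ih _ (by rw [Fin.lt_def]; simp only; omega))
        (adj_iff.2 (by simp only; omega)) fun w hw hwv => ?_
      rw [adj_iff] at hw
      rw [ne_eq, Fin.ext_iff] at hwv
      by_cases hw₃ : w.val = 3
      · exact (Fin.ext hw₃ : w = ⟨3, by omega⟩) ▸ apply_three hn φ
      · simp only at hw
        exact ih w (by rw [Fin.lt_def]; omega)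

end pathWithChord

end SimpleGraph

/-- The complete graph `K_n` has distinguishing index exactly `2` for all `n ≥ 6`:
there is a distinguishing edge-colouring with `2` colours, but none with `1` colour. -/
theorem distinguishing_index_complete_graph (n : ℕ) (hn : 6 ≤ n) :
    (∃ c : (⊤ : SimpleGraph (Fin n)).edgeSet → Fin 2,
      ∀ γ : (⊤ : SimpleGraph (Fin n)) ≃g (⊤ : SimpleGraph (Fin n)),
        (∀ e, c (γ.mapEdgeSet e) = c e) → ∀ v, γ v = v) ∧
    ¬ (∃ c : (⊤ : SimpleGraph (Fin n)).edgeSet → Fin 1,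
      ∀ γ : (⊤ : SimpleGraph (Fin n)) ≃g (⊤ : SimpleGraph (Fin n)),
        (∀ e, c (γ.mapEdgeSet e) = c e) → ∀ v, γ v = v) := by
  have : Nontrivial (Fin n) := Fin.nontrivial_iff_two_le.2 (by omega)
  exact ⟨(SimpleGraph.pathWithChord.isAsymmetric hn).exists_isDistinguishingEdgeColoring_fin_two,
    fun ⟨c, hc⟩ => SimpleGraph.not_isDistinguishingEdgeColoring_of_subsingleton c hc⟩
end

section
/- If μ is a cardinal with μ = ℵ_μ, then every connected μ-regular graph G admits a 2-edge-colouring whose only colour-preserving automorphism is the identity; that is, G has distinguishing index at most 2. -/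
open Cardinal Ordinal SimpleGraph

universe u

namespace DistinguishAux

instance (priority := 5000) instWOtoType (o : Ordinal.{u}) :
    IsWellOrder o.ToType (· < ·) := isWellOrder_lt


variable {V W : Type u} {G : SimpleGraph V}

/-- Encode a walk as a list of labels, via chosen labellings of neighbour sets. -/
def enc (g : ∀ v : V, G.neighborSet v → W) : ∀ {a b : V}, G.Walk a b → List W
  | _, _, SimpleGraph.Walk.nil => []
  | _, _, SimpleGraph.Walk.cons h p => g _ ⟨_, h⟩ :: enc g p

lemma enc_inj (g : ∀ v : V, G.neighborSet v → W) (hg : ∀ v, Function.Injective (g v)) :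
    ∀ {a b : V} (p : G.Walk a b) {b' : V} (q : G.Walk a b'), enc g p = enc g q → b = b' := by
  intro a b p
  induction p with
  | nil =>
    intro b' q h
    cases q with
    | nil => rfl
    | cons h' q => simp [enc] at h
  | @cons a c b hadj p ih =>
    intro b' q h
    cases q with
    | nil => simp [enc] at h
    | @cons _ c' _ hadj' q =>
      simp only [enc, List.cons.injEq] at h
      obtain ⟨h1, h2⟩ := h
      have hc : c = c' := congrArg Subtype.val (hg a h1)
      subst hc
      exact ih q h2

lemma mk_le_of_connected (hconn : G.Connected) {μ : Cardinal.{u}} (hμ : ℵ₀ ≤ μ)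
    (hdeg : ∀ v : V, #(G.neighborSet v) = μ) : #V ≤ μ := by
  classical
  obtain ⟨v0⟩ := hconn.nonempty
  have hWcard : #(μ.ord.ToType) = μ := by rw [mk_toType, card_ord]
  have : Infinite (μ.ord.ToType) := by rw [Cardinal.infinite_iff, hWcard]; exact hμ
  have hg : ∀ v : V, Nonempty (G.neighborSet v ↪ μ.ord.ToType) := by
    intro v
    rw [← Cardinal.le_def, hdeg v, hWcard]
  let g : ∀ v : V, G.neighborSet v ↪ μ.ord.ToType := fun v => Classical.choice (hg v)
  let p : ∀ v : V, G.Walk v0 v := fun v => Classical.choice (hconn.preconnected v0 v)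
  have hinj : Function.Injective (fun v => enc (fun v => (g v : G.neighborSet v → μ.ord.ToType)) (p v)) := by
    intro v v' h
    exact enc_inj _ (fun v => (g v).injective) (p v) (p v') h
  calc #V ≤ #(List (μ.ord.ToType)) := Cardinal.mk_le_of_injective hinj
    _ = #(μ.ord.ToType) := Cardinal.mk_list_eq_mk _
    _ = μ := hWcard





lemma card_le_aleph (o : Ordinal.{u}) : o.card ≤ Cardinal.aleph o := by
  have := Ordinal.card_le_card (Ordinal.le_omega_self o)
  rwa [Ordinal.card_omega] at this

end DistinguishAux

open DistinguishAux

/-- If `μ` is a cardinal with `μ = ℵ_μ` (in particular, consistently, `μ = 2^κ` for a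
regular infinite cardinal `κ`), then every connected `μ`-regular graph admits a
2-edge-colouring whose only colour-preserving automorphism is the identity. -/
theorem distinguishing_index_le_two_of_fixed_point {V : Type u} (G : SimpleGraph V)
    (μ : Cardinal.{u}) (hfix : Cardinal.aleph μ.ord = μ)
    (hconn : G.Connected) (hreg : ∀ v : V, #(G.incidenceSet v) = μ) :
    ∃ c : G.edgeSet → Fin 2,
      ∀ γ : G ≃g G, (∀ e : G.edgeSet, c (γ.mapEdgeSet e) = c e) → ∀ v : V, γ v = v := by
  classical
  have hℵ0 : ℵ₀ ≤ μ := hfix ▸ aleph0_le_aleph μ.ord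
  have hnbr : ∀ v : V, #(G.neighborSet v) = μ := fun v =>
    (Cardinal.mk_congr (G.incidenceSetEquivNeighborSet v)).symm.trans (hreg v)
  have hVle : #V ≤ μ := mk_le_of_connected hconn hℵ0 hnbr
  have hT : #(μ.ord.ToType) = μ := by rw [mk_toType, card_ord]
  obtain ⟨f⟩ : Nonempty (V ↪ μ.ord.ToType) := by rw [← Cardinal.le_def, hT]; exact hVle
  set r : V → Ordinal.{u} := fun v => Ordinal.typein (α := μ.ord.ToType) (· < ·) (f v) with hr
  have hrinj : Function.Injective r := fun v w h =>
    f.injective (Ordinal.typein_injective (α := μ.ord.ToType) (· < ·) h)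
  have hrlt : ∀ v, r v < μ.ord := fun v => by
    have := Ordinal.typein_lt_type (α := μ.ord.ToType) (· < ·) (f v)
    rwa [Ordinal.type_toType] at this
  -- the set of earlier vertices is small
  have hEcard : ∀ v : V, #{w : V | r w < r v} ≤ (r v).card := by
    intro v
    have hlt : ∀ w : {w : V | r w < r v}, f w.1 < f v := fun w =>
      (Ordinal.typein_lt_typein (α := μ.ord.ToType) (· < ·)).1 w.2
    have h1 : #{w : V | r w < r v} ≤ #{y : μ.ord.ToType // y < f v} := by
      refine Cardinal.mk_le_of_injective
        (f := fun w : {w : V | r w < r v} => (⟨f w.1, hlt w⟩ : {y : μ.ord.ToType // y < f v})) ?_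
      intro w w' h
      exact Subtype.ext (f.injective (congrArg Subtype.val h))
    have h2 : #{y : μ.ord.ToType // y < f v} = (r v).card := by
      rw [hr]
      exact (Ordinal.card_typein (f v)).symm
    rwa [h2] at h1
  have hrsmall : ∀ v : V, (r v).card < μ := fun v => Cardinal.lt_ord.1 (hrlt v)
  -- later neighbours
  have hlater : ∀ v : V, μ ≤ #{w : V | G.Adj v w ∧ r v < r w} := by
    intro v
    have hsub : G.neighborSet v ⊆ {w : V | G.Adj v w ∧ r v < r w} ∪ {w : V | r w < r v} := by
      intro w hw
      rcases lt_or_gt_of_ne (fun h : r v = r w => (G.ne_of_adj hw) (hrinj h)) with h | h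
      · exact Or.inl ⟨hw, h⟩
      · exact Or.inr h
    by_contra hcon
    push_neg at hcon
    have : #(G.neighborSet v) ≤ #({w : V | G.Adj v w ∧ r v < r w} ∪ {w : V | r w < r v} : Set V) :=
      Cardinal.mk_le_mk_of_subset hsub
    have hbig : #({w : V | G.Adj v w ∧ r v < r w} ∪ {w : V | r w < r v} : Set V) < μ := by
      refine lt_of_le_of_lt (Cardinal.mk_union_le _ _) ?_
      exact Cardinal.add_lt_of_lt hℵ0 hcon ((hEcard v).trans_lt (hrsmall v))
    rw [hnbr v] at this
    exact absurd (this.trans_lt hbig) (lt_irrefl μ)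
  -- choose the marked sets
  have hTex : ∀ v : V, ∃ T : Set V, T ⊆ {w : V | G.Adj v w ∧ r v < r w} ∧ #T = Cardinal.aleph (r v) := by
    intro v
    have hle : Cardinal.aleph (r v) ≤ #{w : V | G.Adj v w ∧ r v < r w} := by
      refine le_trans ?_ (hlater v)
      rw [← hfix]
      exact aleph_le_aleph.2 (hrlt v).le
    obtain ⟨S, hS⟩ := Cardinal.le_mk_iff_exists_set.1 hle
    refine ⟨Subtype.val '' S, ?_, ?_⟩
    · rintro w ⟨w', _, rfl⟩; exact w'.2
    · rw [Cardinal.mk_image_eq Subtype.val_injective]; exact hS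
  choose T hTsub hTcard using hTex
  -- the colouring
  set c : G.edgeSet → Fin 2 :=
    fun e => if ∃ a b : V, (e : Sym2 V) = s(a, b) ∧ b ∈ T a then 1 else 0 with hc
  refine ⟨c, ?_⟩
  -- uniqueness of representing pairs
  have hrep : ∀ a b a' b' : V, s(a, b) = s(a', b') → b ∈ T a → b' ∈ T a' → a = a' ∧ b = b' := by
    intro a b a' b' he hb hb'
    have h1 : r a < r b := (hTsub a hb).2
    have h2 : r a' < r b' := (hTsub a' hb').2
    rcases Sym2.eq_iff.1 he with ⟨rfl, rfl⟩ | ⟨rfl, rfl⟩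
    · exact ⟨rfl, rfl⟩
    · exact absurd (h1.trans h2) (lt_irrefl _)
  -- colour-1 degree
  set D : V → Cardinal.{u} := fun v => #{e : G.edgeSet | v ∈ (e : Sym2 V) ∧ c e = 1} with hD
  have hDval : ∀ v : V, D v = Cardinal.aleph (r v) := by
    intro v
    have hle1 : Cardinal.aleph (r v) ≤ D v := by
      rw [← hTcard v]
      have hmem : ∀ w : T v, (⟨s(v, w.1), G.mem_edgeSet.2 (hTsub v w.2).1⟩ : G.edgeSet) ∈
          {e : G.edgeSet | v ∈ (e : Sym2 V) ∧ c e = 1} := by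
        intro w
        refine ⟨Sym2.mem_mk_left _ _, ?_⟩
        rw [hc]
        exact if_pos ⟨v, w.1, rfl, w.2⟩
      refine Cardinal.mk_le_of_injective
        (f := fun w : T v => (⟨_, hmem w⟩ : {e : G.edgeSet | v ∈ (e : Sym2 V) ∧ c e = 1})) ?_
      intro w w' h
      have h2 : s(v, w.1) = s(v, w'.1) :=
        congrArg (fun e : G.edgeSet => (e : Sym2 V)) (congrArg Subtype.val h)
      exact Subtype.ext (Sym2.congr_right.1 h2)
    have hle2 : D v ≤ Cardinal.aleph (r v) := by
      have key : ∀ e : {e : G.edgeSet | v ∈ (e : Sym2 V) ∧ c e = 1},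
          ∃ w : V, (e.1 : Sym2 V) = s(v, w) ∧ (w ∈ T v ∨ r w < r v) := by
        rintro ⟨e, hv, hc1⟩
        have hP : ∃ a b : V, (e : Sym2 V) = s(a, b) ∧ b ∈ T a := by
          by_contra hcon
          simp only [hc, if_neg hcon] at hc1
          exact absurd hc1 (by decide)
        obtain ⟨a, b, heq, hb⟩ := hP
        rcases Sym2.mem_iff.1 (heq ▸ hv) with rfl | rfl
        · exact ⟨b, heq, Or.inl hb⟩
        · exact ⟨a, by rw [heq]; exact Sym2.eq_swap, Or.inr (hTsub a hb).2⟩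
      choose w hw hw' using key
      have hwinj : Function.Injective w := by
        intro e e' h
        apply Subtype.ext
        apply Subtype.ext
        exact (hw e).trans ((congrArg (fun x => s(v, x)) h).trans (hw e').symm)
      have hstep : D v ≤ #(↥(T v ∪ {x : V | r x < r v})) := by
        refine Cardinal.mk_le_of_injective (f := fun e => (⟨w e, by
          rcases hw' e with h | h
          · exact Or.inl h
          · exact Or.inr h⟩ : ↥(T v ∪ {x : V | r x < r v}))) ?_
        intro e e' h
        exact hwinj (congrArg Subtype.val h)
      calc D v ≤ #(↥(T v ∪ {x : V | r x < r v})) := hstep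
        _ ≤ #(T v) + #{x : V | r x < r v} := Cardinal.mk_union_le _ _
        _ ≤ Cardinal.aleph (r v) + Cardinal.aleph (r v) :=
            add_le_add (le_of_eq (hTcard v)) ((hEcard v).trans (DistinguishAux.card_le_aleph _))
        _ = Cardinal.aleph (r v) := Cardinal.add_eq_self (aleph0_le_aleph _)
    exact le_antisymm hle2 hle1
  intro γ hγ v
  -- D is invariant
  have hinv : D (γ v) = D v := by
    have hmem : ∀ (u : V) (e : G.edgeSet), u ∈ (e : Sym2 V) ↔ γ u ∈ (γ.mapEdgeSet e : Sym2 V) := by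
      intro u e
      have hcoe : (γ.mapEdgeSet e : Sym2 V) = Sym2.map γ (e : Sym2 V) := rfl
      rw [hcoe]
      constructor
      · intro h; exact Sym2.mem_map.2 ⟨u, h, rfl⟩
      · intro h
        obtain ⟨a, ha, hau⟩ := Sym2.mem_map.1 h
        have : a = u := γ.toEquiv.injective hau
        rwa [← this]
    have : D v = D (γ v) := Cardinal.mk_congr (Equiv.subtypeEquiv γ.mapEdgeSet (fun e => by
      simp only [Set.mem_setOf_eq]
      rw [hγ e]
      exact and_congr (hmem v e) Iff.rfl))
    exact this.symm
  have := (hDval (γ v)).symm.trans (hinv.trans (hDval v))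
  have : r (γ v) = r v := le_antisymm (aleph_le_aleph.1 this.le) (aleph_le_aleph.1 this.ge)
  exact hrinj this
end
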